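/- With the notation of the context, for every particle array v ∈ Z^{T·M} and every index path k ∈ {1,…,M}^T one has (π⊗Φ)(v) · b(k | v) = (π⊗Φ)(s_{1,k}(v)) · b(k | s_{1,k}(v)); that is, the joint density of the conditional SMC particles together with the backward-sampling probability of the path k is invariant under swapping the conditioned path v^{(𝟏)} with the path v^{(k)}. -/

import Mathlib

/-! After the normaliser of the backward kernel along the conditioned path `𝟏` is cancelled
against the factor of `Φ` that `𝟏` lacks, `(π⊗Φ)(v) · b(k|v)` becomes an expression
`pairDensity v 𝟏 k` that is symmetric in the two paths `𝟏` and `k`, and in which every sum and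
product over particles is invariant under relabelling the particles at each time. The swap
`s_{1,k}` is such a relabelling, and it exchanges the two paths. -/

open MeasureTheory Finset

namespace SSM15

variable {Z : Type*}

/-- The path `v^{(k)}` extracted from the particle array `v`. -/
def pathOf (n m : ℕ) (v : Fin (n + 1) → Fin (m + 1) → Z)
    (k : Fin (n + 1) → Fin (m + 1)) : Fin (n + 1) → Z := fun t => v t (k t)

/-- The constant index path `𝟏`. -/
def onePath (n m : ℕ) : Fin (n + 1) → Fin (m + 1) := fun _ => 0

/-- The swap operator `s_{1,k}`. -/
def swapArr (n m : ℕ) (k : Fin (n + 1) → Fin (m + 1))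
    (v : Fin (n + 1) → Fin (m + 1) → Z) : Fin (n + 1) → Fin (m + 1) → Z :=
  fun t i => v t (Equiv.swap 0 (k t) i)

/-- The unnormalised target density `γ(z)`. -/
noncomputable def gammaSSM (n : ℕ) (m₀ : Z → ℝ) (f : Z → Z → ℝ)
    (w : Fin (n + 1) → Z → ℝ) (z : Fin (n + 1) → Z) : ℝ :=
  m₀ (z 0) * (∏ t : Fin n, f (z t.castSucc) (z t.succ)) * ∏ t, w t (z t)

/-- The backward-sampling probabilities `b(k|v)`. -/
noncomputable def bBack (n m : ℕ) (f : Z → Z → ℝ) (w : Fin (n + 1) → Z → ℝ)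
    (k : Fin (n + 1) → Fin (m + 1)) (v : Fin (n + 1) → Fin (m + 1) → Z) : ℝ :=
  (w (Fin.last n) (v (Fin.last n) (k (Fin.last n))) /
      ∑ i, w (Fin.last n) (v (Fin.last n) i)) *
    ∏ t : Fin n,
      (w t.castSucc (v t.castSucc (k t.castSucc)) *
          f (v t.castSucc (k t.castSucc)) (v t.succ (k t.succ))) /
        ∑ i, w t.castSucc (v t.castSucc i) * f (v t.castSucc i) (v t.succ (k t.succ))

/-- The conditional-SMC density `(π⊗Φ)(v)`, with `π = γ/C`. -/
noncomputable def piPhi (n m : ℕ) (m₀ : Z → ℝ) (f : Z → Z → ℝ)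
    (w : Fin (n + 1) → Z → ℝ) (C : ℝ) (v : Fin (n + 1) → Fin (m + 1) → Z) : ℝ :=
  (gammaSSM n m₀ f w (pathOf n m v (onePath n m)) / C) *
    (∏ i ∈ univ.erase (0 : Fin (m + 1)), m₀ (v 0 i)) *
    ∏ t : Fin n, ∏ i ∈ univ.erase (0 : Fin (m + 1)),
      (∑ j, w t.castSucc (v t.castSucc j) * f (v t.castSucc j) (v t.succ i)) /
        ∑ j, w t.castSucc (v t.castSucc j)

noncomputable def forwardNorm (n m : ℕ) (f : Z → Z → ℝ) (w : Fin (n + 1) → Z → ℝ)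
    (v : Fin (n + 1) → Fin (m + 1) → Z) (t : Fin n) (z : Z) : ℝ :=
  ∑ j, w t.castSucc (v t.castSucc j) * f (v t.castSucc j) z

noncomputable def backwardWeight (n m : ℕ) (f : Z → Z → ℝ) (w : Fin (n + 1) → Z → ℝ)
    (v : Fin (n + 1) → Fin (m + 1) → Z) (t : Fin n) (k : Fin (n + 1) → Fin (m + 1)) : ℝ :=
  w t.castSucc (v t.castSucc (k t.castSucc)) *
      f (v t.castSucc (k t.castSucc)) (v t.succ (k t.succ)) /
    forwardNorm n m f w v t (v t.succ (k t.succ))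

/-- `(π⊗Φ)(v) · b(b|v)` with the conditioned path `𝟏` replaced by `a`, written so that it is
symmetric in `a` and `b`. -/
noncomputable def pairDensity (n m : ℕ) (m₀ : Z → ℝ) (f : Z → Z → ℝ)
    (w : Fin (n + 1) → Z → ℝ) (C : ℝ) (v : Fin (n + 1) → Fin (m + 1) → Z)
    (a b : Fin (n + 1) → Fin (m + 1)) : ℝ :=
  (∏ i, m₀ (v 0 i)) / C *
    (w (Fin.last n) (v (Fin.last n) (a (Fin.last n))) *
        w (Fin.last n) (v (Fin.last n) (b (Fin.last n))) /
      ∑ i, w (Fin.last n) (v (Fin.last n) i)) *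
    ∏ t : Fin n, (∏ i, forwardNorm n m f w v t (v t.succ i)) /
        (∑ j, w t.castSucc (v t.castSucc j)) ^ m *
      (backwardWeight n m f w v t a * backwardWeight n m f w v t b)

section

variable {n m : ℕ} {m₀ : Z → ℝ} {f : Z → Z → ℝ} {w : Fin (n + 1) → Z → ℝ} {C : ℝ}

lemma forwardNorm_pos (hfpos : ∀ z z', 0 < f z z') (hwpos : ∀ t z, 0 < w t z)
    (v : Fin (n + 1) → Fin (m + 1) → Z) (t : Fin n) (z : Z) :
    0 < forwardNorm n m f w v t z :=
  sum_pos (fun _ _ => mul_pos (hwpos _ _) (hfpos _ _)) univ_nonempty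

lemma forwardNorm_permute (σ : Fin (n + 1) → Equiv.Perm (Fin (m + 1)))
    (v : Fin (n + 1) → Fin (m + 1) → Z) (t : Fin n) (z : Z) :
    forwardNorm n m f w (fun s i => v s (σ s i)) t z = forwardNorm n m f w v t z :=
  Equiv.sum_comp (σ t.castSucc) fun j => w t.castSucc (v t.castSucc j) * f (v t.castSucc j) z

lemma backwardWeight_permute (σ : Fin (n + 1) → Equiv.Perm (Fin (m + 1)))
    (v : Fin (n + 1) → Fin (m + 1) → Z) (t : Fin n) (k : Fin (n + 1) → Fin (m + 1)) :
    backwardWeight n m f w (fun s i => v s (σ s i)) t k =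
      backwardWeight n m f w v t fun s => σ s (k s) := by
  simp only [backwardWeight, forwardNorm_permute]

lemma pairDensity_comm (v : Fin (n + 1) → Fin (m + 1) → Z) (a b : Fin (n + 1) → Fin (m + 1)) :
    pairDensity n m m₀ f w C v a b = pairDensity n m m₀ f w C v b a := by
  simp only [pairDensity, mul_comm (w _ (v _ (a _))), mul_comm (backwardWeight n m f w v _ a)]

lemma pairDensity_permute (σ : Fin (n + 1) → Equiv.Perm (Fin (m + 1)))
    (v : Fin (n + 1) → Fin (m + 1) → Z) (a b : Fin (n + 1) → Fin (m + 1)) :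
    pairDensity n m m₀ f w C (fun s i => v s (σ s i)) a b =
      pairDensity n m m₀ f w C v (fun s => σ s (a s)) (fun s => σ s (b s)) := by
  have hm₀ : ∏ i, m₀ (v 0 (σ 0 i)) = ∏ i, m₀ (v 0 i) :=
    Equiv.prod_comp (σ 0) fun i => m₀ (v 0 i)
  have hS : ∀ s, ∑ i, w s (v s (σ s i)) = ∑ i, w s (v s i) :=
    fun s => Equiv.sum_comp (σ s) fun i => w s (v s i)
  have hN : ∀ t : Fin n, ∏ i, forwardNorm n m f w v t (v t.succ (σ t.succ i)) =
      ∏ i, forwardNorm n m f w v t (v t.succ i) :=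
    fun t => Equiv.prod_comp (σ t.succ) fun i => forwardNorm n m f w v t (v t.succ i)
  simp only [pairDensity, backwardWeight_permute, forwardNorm_permute, hm₀, hS, hN]

lemma piPhi_factor_eq {v : Fin (n + 1) → Fin (m + 1) → Z} (t : Fin n)
    (hN : forwardNorm n m f w v t (v t.succ 0) ≠ 0) :
    w t.castSucc (v t.castSucc 0) * f (v t.castSucc 0) (v t.succ 0) *
        ∏ i ∈ univ.erase 0, forwardNorm n m f w v t (v t.succ i) /
          ∑ j, w t.castSucc (v t.castSucc j) =
      (∏ i, forwardNorm n m f w v t (v t.succ i)) / (∑ j, w t.castSucc (v t.castSucc j)) ^ m *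
        backwardWeight n m f w v t (onePath n m) := by
  rw [prod_div_distrib, prod_const, card_erase_of_mem (mem_univ _), card_univ, Fintype.card_fin,
    Nat.add_sub_cancel, ← mul_prod_erase _ _ (mem_univ 0)]
  simp only [backwardWeight, onePath]
  field_simp

lemma piPhi_eq {v : Fin (n + 1) → Fin (m + 1) → Z}
    (hN : ∀ t, forwardNorm n m f w v t (v t.succ 0) ≠ 0) :
    piPhi n m m₀ f w C v = (∏ i, m₀ (v 0 i)) / C * w (Fin.last n) (v (Fin.last n) 0) *
      ∏ t : Fin n, (∏ i, forwardNorm n m f w v t (v t.succ i)) /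
        (∑ j, w t.castSucc (v t.castSucc j)) ^ m * backwardWeight n m f w v t (onePath n m) := by
  simp only [piPhi, gammaSSM, pathOf]
  rw [← prod_congr rfl fun t _ => piPhi_factor_eq t (hN t), prod_mul_distrib, prod_mul_distrib,
    Fin.prod_univ_castSucc (f := fun t => w t (v t (onePath n m t))),
    ← mul_prod_erase univ (fun i => m₀ (v 0 i)) (mem_univ 0)]
  simp only [onePath, forwardNorm]
  ring

lemma bBack_eq (v : Fin (n + 1) → Fin (m + 1) → Z) (k : Fin (n + 1) → Fin (m + 1)) :
    bBack n m f w k v = w (Fin.last n) (v (Fin.last n) (k (Fin.last n))) /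
      (∑ i, w (Fin.last n) (v (Fin.last n) i)) * ∏ t : Fin n, backwardWeight n m f w v t k :=
  rfl

lemma piPhi_mul_bBack {v : Fin (n + 1) → Fin (m + 1) → Z}
    (hN : ∀ t, forwardNorm n m f w v t (v t.succ 0) ≠ 0) (k : Fin (n + 1) → Fin (m + 1)) :
    piPhi n m m₀ f w C v * bBack n m f w k v = pairDensity n m m₀ f w C v (onePath n m) k := by
  rw [piPhi_eq hN, bBack_eq, pairDensity]
  simp only [onePath, ← mul_assoc, prod_mul_distrib]
  ring

lemma pairDensity_swapArr (v : Fin (n + 1) → Fin (m + 1) → Z) (k : Fin (n + 1) → Fin (m + 1)) :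
    pairDensity n m m₀ f w C (swapArr n m k v) (onePath n m) k =
      pairDensity n m m₀ f w C v k (onePath n m) := by
  have h := pairDensity_permute (m₀ := m₀) (f := f) (w := w) (C := C)
    (fun s => Equiv.swap 0 (k s)) v (onePath n m) k
  simp only [onePath, Equiv.swap_apply_left, Equiv.swap_apply_right] at h
  exact h

end

theorem cSMC_swap_invariance_general
    (n m : ℕ)
    (m₀ : Z → ℝ) (f : Z → Z → ℝ) (w : Fin (n + 1) → Z → ℝ)
    (hfpos : ∀ z z', 0 < f z z') (hwpos : ∀ t z, 0 < w t z)
    (C : ℝ)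
    (v : Fin (n + 1) → Fin (m + 1) → Z) (k : Fin (n + 1) → Fin (m + 1)) :
    piPhi n m m₀ f w C v * bBack n m f w k v
      = piPhi n m m₀ f w C (swapArr n m k v) *
          bBack n m f w k (swapArr n m k v) := by
  have hN : ∀ v t z, forwardNorm n m f w v t z ≠ 0 :=
    fun v t z => (forwardNorm_pos hfpos hwpos v t z).ne'
  rw [piPhi_mul_bBack fun t => hN _ t _, piPhi_mul_bBack fun t => hN _ t _,
    pairDensity_swapArr, pairDensity_comm]

/-- For every particle array `v` and index path `k`,
`(π⊗Φ)(v) · b(k|v) = (π⊗Φ)(s_{1,k}(v)) · b(k|s_{1,k}(v))`. -/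
theorem cSMC_swap_invariance
    [MeasurableSpace Z] (ν : Measure Z) [SigmaFinite ν] (n m : ℕ)
    (m₀ : Z → ℝ) (f : Z → Z → ℝ) (w : Fin (n + 1) → Z → ℝ)
    (hm₀ : Measurable m₀) (hf : Measurable fun p : Z × Z => f p.1 p.2)
    (hw : ∀ t, Measurable (w t))
    (hm₀pos : ∀ z, 0 < m₀ z) (hfpos : ∀ z z', 0 < f z z') (hwpos : ∀ t z, 0 < w t z)
    (C : ℝ)
    (hC : C = ∫ z, gammaSSM n m₀ f w z ∂(Measure.pi fun _ : Fin (n + 1) => ν))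
    (hCpos : 0 < C)
    (hCint : Integrable (gammaSSM n m₀ f w) (Measure.pi fun _ : Fin (n + 1) => ν))
    (v : Fin (n + 1) → Fin (m + 1) → Z) (k : Fin (n + 1) → Fin (m + 1)) :
    piPhi n m m₀ f w C v * bBack n m f w k v
      = piPhi n m m₀ f w C (swapArr n m k v) *
          bBack n m f w k (swapArr n m k v) :=
  cSMC_swap_invariance_general n m m₀ f w hfpos hwpos C v k

end SSM15
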